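/- arXiv:math/0501350 — 5 statements merged into one kernel-verified Lean document; each statement's English description precedes it below -/
import Mathlib

section
/- Let g be a finite-dimensional complex semisimple Lie algebra with Killing form κ. Let p ⊆ g be a Lie subalgebra, let n ⊆ p be a Lie ideal of p such that p = {y ∈ g : κ(y,z) = 0 for all z ∈ n}, and let m ⊆ p be a linear subspace with p = m ⊕ n as vector spaces. Then an element x ∈ n satisfies [p, x] = n (i.e. x is a Richardson element for p) if and only if dim g^x = dim m, where g^x = {y ∈ g : [y, x] = 0} is the centralizer of x in g. -/
/-- The centralizer `g^x = {y ∈ g : [y, x] = 0}` of an element `x` of a Lie algebra,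
as a submodule. -/
def lieCentralizer {g : Type*} [LieRing g] [LieAlgebra ℂ g] (x : g) : Submodule ℂ g where
  carrier := {y | ⁅y, x⁆ = 0}
  add_mem' := by
    intro a b ha hb
    simp only [Set.mem_setOf_eq, add_lie] at *
    rw [ha, hb, add_zero]
  zero_mem' := by simp
  smul_mem' := by
    intro c a ha
    simp only [Set.mem_setOf_eq, smul_lie] at *
    rw [ha, smul_zero]

/-- Richardson's criterion: for a parabolic subalgebra `p = m ⊕ n` of a complex semisimple
Lie algebra `g` (with `n` the nilradical, i.e. the Killing-orthogonal complement of `p`,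
and a Lie ideal of `p`, and `m` a Levi factor), an element `x ∈ n` satisfies `[p, x] = n`
if and only if `dim g^x = dim m`. -/
theorem richardson_criterion
    {g : Type*} [LieRing g] [LieAlgebra ℂ g] [Module.Finite ℂ g]
    [LieAlgebra.IsSemisimple ℂ g]
    (p : LieSubalgebra ℂ g) (n m : Submodule ℂ g)
    (hnp : n ≤ p.toSubmodule)
    (hideal : ∀ y ∈ p, ∀ z ∈ n, ⁅y, z⁆ ∈ n)
    (hperp : ∀ y : g, y ∈ p ↔ ∀ z ∈ n, killingForm ℂ g y z = 0)
    (hsup : m ⊔ n = p.toSubmodule) (hinf : m ⊓ n = ⊥)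
    (x : g) (hx : x ∈ n) :
    Submodule.span ℂ {z : g | ∃ y ∈ p, z = ⁅y, x⁆} = n ↔
      Module.finrank ℂ (lieCentralizer x) = Module.finrank ℂ m := by
  classical
  -- the linear map `y ↦ ⁅y, x⁆`
  set f : g →ₗ[ℂ] g := -(LieAlgebra.ad ℂ g x) with hf
  have hf_apply : ∀ y : g, f y = ⁅y, x⁆ := by
    intro y
    rw [hf]
    simp only [LinearMap.neg_apply, LieAlgebra.ad_apply]
    exact lie_skew y x
  -- the span in the statement is the image of `p` under `f`
  set S : Submodule ℂ g := Submodule.map f p.toSubmodule with hS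
  have hspan : Submodule.span ℂ {z : g | ∃ y ∈ p, z = ⁅y, x⁆} = S := by
    have hset : {z : g | ∃ y ∈ p, z = ⁅y, x⁆} = (S : Set g) := by
      ext z
      constructor
      · rintro ⟨y, hy, rfl⟩
        exact ⟨y, hy, (hf_apply y)⟩
      · rintro ⟨y, hy, rfl⟩
        exact ⟨y, hy, hf_apply y⟩
    rw [hset, Submodule.span_eq]
  -- the kernel of `f` is the centralizer of `x`
  have hker : LinearMap.ker f = lieCentralizer x := by
    ext z
    simp only [LinearMap.mem_ker, hf_apply]
    rfl
  -- `S ≤ n`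
  have hSn : S ≤ n := by
    rintro z ⟨y, hy, rfl⟩
    rw [hf_apply]
    exact hideal y hy x hx
  -- rank-nullity for `f` restricted to `p`
  have hrn : Module.finrank ℂ S +
      Module.finrank ℂ (lieCentralizer x ⊓ p.toSubmodule : Submodule ℂ g) =
      Module.finrank ℂ p.toSubmodule := by
    have h1 := LinearMap.finrank_range_add_finrank_ker (f.domRestrict p.toSubmodule)
    rw [LinearMap.range_domRestrict, LinearMap.ker_domRestrict] at h1
    have h2 : Submodule.comap p.toSubmodule.subtype (LinearMap.ker f) =
        Submodule.comap p.toSubmodule.subtype (lieCentralizer x ⊓ p.toSubmodule) := by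
      ext ⟨z, hz⟩
      simp [hker, hz]
    have h3 : Module.finrank ℂ
        (Submodule.comap p.toSubmodule.subtype (lieCentralizer x ⊓ p.toSubmodule)) =
        Module.finrank ℂ (lieCentralizer x ⊓ p.toSubmodule : Submodule ℂ g) :=
      (Submodule.comapSubtypeEquivOfLe
        (inf_le_right : lieCentralizer x ⊓ p.toSubmodule ≤ p.toSubmodule)).finrank_eq
    rw [h2, h3] at h1
    simpa using h1
  -- `dim m + dim n = dim p`
  have hPMN : Module.finrank ℂ m + Module.finrank ℂ n =
      Module.finrank ℂ p.toSubmodule := by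
    have := Submodule.finrank_sup_add_finrank_inf_eq m n
    rw [hsup, hinf, finrank_bot, add_zero] at this
    exact this.symm
  rw [hspan]
  constructor
  · -- forward direction
    intro hSeq
    -- the centralizer is contained in `p`
    have hcent : (lieCentralizer x : Submodule ℂ g) ≤ p.toSubmodule := by
      intro z hz
      have hzp : z ∈ p := by
        rw [hperp]
        intro w hw
        rw [← hSeq] at hw
        obtain ⟨y, hy, rfl⟩ := hw
        have hzx : ⁅x, z⁆ = 0 := by
          rw [← neg_eq_zero, lie_skew]
          exact hz
        rw [hf_apply, LieModule.traceForm_comm, LieModule.traceForm_apply_lie_apply,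
          hzx, map_zero]
      exact hzp
    have hKeq : (lieCentralizer x ⊓ p.toSubmodule : Submodule ℂ g) = lieCentralizer x :=
      inf_eq_left.mpr hcent
    rw [hKeq, hSeq] at hrn
    omega
  · -- backward direction
    intro hdim
    have hle : Module.finrank ℂ (lieCentralizer x ⊓ p.toSubmodule : Submodule ℂ g) ≤
        Module.finrank ℂ (lieCentralizer x) :=
      Submodule.finrank_mono inf_le_left
    have hSfin : Module.finrank ℂ n ≤ Module.finrank ℂ S := by omega
    exact Submodule.eq_of_le_of_finrank_le hSn hSfin
end

section
/- Let g be a finite-dimensional complex semisimple Lie algebra with Killing form κ. Let p ⊆ g be a Lie subalgebra, let n ⊆ p be a Lie ideal of p such that p = {y ∈ g : κ(y,z) = 0 for all z ∈ n}, and let m ⊆ p be a linear subspace with p = m ⊕ n as vector spaces. If X ∈ n satisfies [p, X] = n, then dim g^X ≤ dim g^Y for every Y ∈ n, where g^x = {y ∈ g : [y, x] = 0} denotes the centralizer of x in g. -/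
section RankNullity

variable {K V W : Type*} [DivisionRing K] [AddCommGroup V] [Module K V] [AddCommGroup W]
  [Module K W] [FiniteDimensional K V] (f : V →ₗ[K] W)

theorem LinearMap.finrank_map_add_finrank_ker_of_ker_le {S : Submodule K V}
    (h : LinearMap.ker f ≤ S) :
    Module.finrank K (S.map f) + Module.finrank K (LinearMap.ker f) = Module.finrank K S := by
  have := (f.domRestrict S).finrank_range_add_finrank_ker
  rwa [LinearMap.range_domRestrict, LinearMap.ker_domRestrict,
    (Submodule.comapSubtypeEquivOfLe h).finrank_eq] at this

theorem LinearMap.finrank_le_finrank_add_finrank_ker_of_map_le [FiniteDimensional K W]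
    {S : Submodule K V} {N : Submodule K W} (h : S.map f ≤ N) :
    Module.finrank K S ≤ Module.finrank K N + Module.finrank K (LinearMap.ker f) := by
  have hrank := (f.domRestrict S).finrank_range_add_finrank_ker
  rw [LinearMap.range_domRestrict, LinearMap.ker_domRestrict] at hrank
  have hker : Module.finrank K ((LinearMap.ker f).comap S.subtype) ≤
      Module.finrank K (LinearMap.ker f) := by
    rw [← Submodule.finrank_map_subtype_eq]
    exact Submodule.finrank_mono (Submodule.map_comap_le _ _)
  have := Submodule.finrank_mono h
  omega

end RankNullity

section RightBracket

variable {g : Type*} [LieRing g] [LieAlgebra ℂ g]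

def rightBracket (x : g) : g →ₗ[ℂ] g where
  toFun y := ⁅y, x⁆
  map_add' a b := add_lie a b x
  map_smul' c a := smul_lie c a x

theorem ker_rightBracket (x : g) : LinearMap.ker (rightBracket x) = lieCentralizer x := rfl

theorem map_rightBracket (S : Submodule ℂ g) (x : g) :
    S.map (rightBracket x) = Submodule.span ℂ {z : g | ∃ y ∈ S, z = ⁅y, x⁆} := by
  rw [← Submodule.span_eq S, ← Submodule.span_image, Submodule.span_eq S]
  congr 1
  ext z
  simp [rightBracket, eq_comm]

theorem killingForm_eq_zero_of_mem_lieCentralizer [Module.Finite ℂ g] {x y z : g}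
    (hy : y ∈ lieCentralizer x) (hz : z ∈ LinearMap.range (rightBracket x)) :
    killingForm ℂ g y z = 0 := by
  obtain ⟨w, rfl⟩ := hz
  have hyx : ⁅y, x⁆ = 0 := hy
  calc killingForm ℂ g y ⁅w, x⁆ = -killingForm ℂ g y ⁅x, w⁆ := by rw [← lie_skew, map_neg]
    _ = -killingForm ℂ g ⁅y, x⁆ w := by rw [LieModule.traceForm_apply_lie_apply]
    _ = 0 := by simp [hyx]

end RightBracket

theorem richardson_minimal_centralizer_general
    {g : Type*} [LieRing g] [LieAlgebra ℂ g] [Module.Finite ℂ g]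
    (p : LieSubalgebra ℂ g) (n : Submodule ℂ g)
    (hideal : ∀ y ∈ p, ∀ z ∈ n, ⁅y, z⁆ ∈ n)
    (hperp : ∀ y : g, y ∈ p ↔ ∀ z ∈ n, killingForm ℂ g y z = 0)
    (X : g)
    (hrich : Submodule.span ℂ {z : g | ∃ y ∈ p, z = ⁅y, X⁆} = n) :
    ∀ Y ∈ n, Module.finrank ℂ (lieCentralizer X) ≤ Module.finrank ℂ (lieCentralizer Y) := by
  intro Y hY
  have hmap : p.toSubmodule.map (rightBracket X) = n := (map_rightBracket _ X).trans hrich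
  have hcent : lieCentralizer X ≤ p.toSubmodule := by
    intro y hy
    refine (hperp y).2 fun z hz => killingForm_eq_zero_of_mem_lieCentralizer hy ?_
    rw [← hmap] at hz
    exact LinearMap.map_le_range hz
  have hX := (rightBracket X).finrank_map_add_finrank_ker_of_ker_le hcent
  have hpY : p.toSubmodule.map (rightBracket Y) ≤ n := by
    rintro _ ⟨y, hy, rfl⟩
    exact hideal y hy Y hY
  have hY := (rightBracket Y).finrank_le_finrank_add_finrank_ker_of_map_le hpY
  rw [hmap, ker_rightBracket] at hX
  rw [ker_rightBracket] at hY
  omega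

/-- A Richardson element `X` (i.e. `X ∈ n` with `[p, X] = n`) has centralizer of
minimal dimension among all elements of the nilradical `n`. -/
theorem richardson_minimal_centralizer
    {g : Type*} [LieRing g] [LieAlgebra ℂ g] [Module.Finite ℂ g]
    [LieAlgebra.IsSemisimple ℂ g]
    (p : LieSubalgebra ℂ g) (n m : Submodule ℂ g)
    (hnp : n ≤ p.toSubmodule)
    (hideal : ∀ y ∈ p, ∀ z ∈ n, ⁅y, z⁆ ∈ n)
    (hperp : ∀ y : g, y ∈ p ↔ ∀ z ∈ n, killingForm ℂ g y z = 0)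
    (hsup : m ⊔ n = p.toSubmodule) (hinf : m ⊓ n = ⊥)
    (X : g) (hX : X ∈ n)
    (hrich : Submodule.span ℂ {z : g | ∃ y ∈ p, z = ⁅y, X⁆} = n) :
    ∀ Y ∈ n, Module.finrank ℂ (lieCentralizer X) ≤ Module.finrank ℂ (lieCentralizer Y) :=
  richardson_minimal_centralizer_general p n hideal hperp X hrich
end

section
/- Let X be an n×n complex matrix having at most one nonzero entry in each row and at most one nonzero entry in each column. Then for every k ≥ 1, the rank of X^k equals the number of sequences (i_0, i_1, …, i_k) of indices such that the entry X_{i_{t−1} i_t} is nonzero for all t = 1,…,k (i.e. the number of k-subchains, paths of k consecutive lines, in the diagram whose lines join i to j whenever X_{ij} ≠ 0). -/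
/-!
The column condition is preserved under products, so `A = X ^ k` again has at most one nonzero
entry per column. Then `A * Aᴴ` is diagonal with `i`-th entry `A i ⬝ᵥ star (A i)`, so the rank of
`A` is its number of nonzero rows. By the row condition a `k`-subchain is determined by its start
`i_0`, and it is the only term of the sum expanding `(X ^ k) i_0 i_k`; hence the starts of
`k`-subchains are exactly the nonzero rows of `X ^ k`.
-/

namespace Matrix

variable {ι m n α : Type*}

def AtMostOneNonzeroPerRow [Zero α] (A : Matrix m n α) : Prop :=
  ∀ i j j', A i j ≠ 0 → A i j' ≠ 0 → j = j'

def AtMostOneNonzeroPerCol [Zero α] (A : Matrix m n α) : Prop :=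
  ∀ i i' j, A i j ≠ 0 → A i' j ≠ 0 → i = i'

theorem exists_ne_zero_of_mul_apply_ne_zero [Fintype n] [NonUnitalNonAssocSemiring α]
    {A : Matrix m n α} {B : Matrix n ι α} {i : m} {j : ι} (h : (A * B) i j ≠ 0) :
    ∃ l, A i l ≠ 0 ∧ B l j ≠ 0 := by
  obtain ⟨l, -, hl⟩ := Finset.exists_ne_zero_of_sum_ne_zero h
  exact ⟨l, left_ne_zero_of_mul hl, right_ne_zero_of_mul hl⟩

theorem AtMostOneNonzeroPerRow.mul_apply_ne_zero [Fintype n] [NonUnitalNonAssocSemiring α]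
    [NoZeroDivisors α] {A : Matrix m n α} (hA : A.AtMostOneNonzeroPerRow) {B : Matrix n ι α}
    {i : m} {l : n} {j : ι} (hil : A i l ≠ 0) (hlj : B l j ≠ 0) : (A * B) i j ≠ 0 := by
  rw [mul_apply, Finset.sum_eq_single l _ (by simp)]
  · exact mul_ne_zero hil hlj
  · intro l' _ hl'
    by_contra h
    exact hl' (hA i l' l (left_ne_zero_of_mul h) hil)

namespace AtMostOneNonzeroPerCol

theorem one [DecidableEq n] [MulZeroOneClass α] :
    (1 : Matrix n n α).AtMostOneNonzeroPerCol := by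
  intro i i' j hi hi'
  rw [of_not_not fun h => hi (one_apply_ne h), of_not_not fun h => hi' (one_apply_ne h)]

theorem mul [Fintype n] [NonUnitalNonAssocSemiring α] {A : Matrix m n α} {B : Matrix n ι α}
    (hA : A.AtMostOneNonzeroPerCol) (hB : B.AtMostOneNonzeroPerCol) :
    (A * B).AtMostOneNonzeroPerCol := by
  intro i i' j hi hi'
  obtain ⟨l, hil, hlj⟩ := exists_ne_zero_of_mul_apply_ne_zero hi
  obtain ⟨l', hil', hlj'⟩ := exists_ne_zero_of_mul_apply_ne_zero hi'
  obtain rfl := hB l l' j hlj hlj'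
  exact hA i i' l hil hil'

theorem pow [Fintype n] [DecidableEq n] [Semiring α] {A : Matrix n n α}
    (hA : A.AtMostOneNonzeroPerCol) (k : ℕ) : (A ^ k).AtMostOneNonzeroPerCol := by
  induction k with
  | zero => exact pow_zero A ▸ one
  | succ k ih => exact pow_succ A k ▸ ih.mul hA

theorem rank_eq [Fintype m] [Fintype n] [Field α] [PartialOrder α] [StarRing α]
    [StarOrderedRing α] {A : Matrix m n α} (hA : A.AtMostOneNonzeroPerCol) :
    A.rank = Nat.card {i // A i ≠ 0} := by
  classical
  have hdiag : A * Aᴴ = diagonal fun i => A i ⬝ᵥ star (A i) := by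
    ext i i'
    rcases eq_or_ne i i' with rfl | hne
    · simp [mul_apply, dotProduct]
    · rw [diagonal_apply_ne _ hne, mul_apply]
      refine Finset.sum_eq_zero fun j _ => ?_
      by_contra h
      exact hne (hA i i' j (left_ne_zero_of_mul h) (by simpa using right_ne_zero_of_mul h))
  rw [← rank_self_mul_conjTranspose, hdiag, rank_diagonal, Nat.card_eq_fintype_card]
  simp only [ne_eq, dotProduct_self_star_eq_zero]

end AtMostOneNonzeroPerCol

def Subchain [Zero α] (X : Matrix ι ι α) (k : ℕ) : Type _ :=
  {f : Fin (k + 1) → ι // ∀ t : Fin k, X (f t.castSucc) (f t.succ) ≠ 0}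

theorem AtMostOneNonzeroPerRow.subchain_ext [Zero α] {X : Matrix ι ι α}
    (hX : X.AtMostOneNonzeroPerRow) {k : ℕ}
    {f g : X.Subchain k} (h : f.1 0 = g.1 0) : f = g := by
  refine Subtype.ext <| funext fun t => ?_
  induction t using Fin.induction with
  | zero => exact h
  | succ t ih => exact hX _ _ _ (ih ▸ f.2 t) (g.2 t)

variable [Fintype ι] [DecidableEq ι] [Semiring α] {X : Matrix ι ι α}

theorem exists_subchain_of_pow_apply_ne_zero {k : ℕ} {i j : ι} (h : (X ^ k) i j ≠ 0) :
    ∃ f : X.Subchain k, f.1 0 = i := by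
  induction k generalizing i with
  | zero => exact ⟨⟨fun _ => i, fun t => t.elim0⟩, rfl⟩
  | succ k ih =>
    rw [pow_succ'] at h
    obtain ⟨l, hil, hlj⟩ := exists_ne_zero_of_mul_apply_ne_zero h
    obtain ⟨⟨f, hf⟩, rfl⟩ := ih hlj
    refine ⟨⟨Fin.cons i f, Fin.cases (by simpa using hil) fun t => ?_⟩, rfl⟩
    simpa [← Fin.succ_castSucc] using hf t

theorem AtMostOneNonzeroPerRow.pow_apply_ne_zero [NoZeroDivisors α] [Nontrivial α]
    (hX : X.AtMostOneNonzeroPerRow) {k : ℕ} (f : X.Subchain k) :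
    (X ^ k) (f.1 0) (f.1 (Fin.last k)) ≠ 0 := by
  induction k with
  | zero => simp
  | succ k ih =>
    rw [pow_succ']
    refine hX.mul_apply_ne_zero (f.2 0) ?_
    simpa [Fin.tail] using ih ⟨Fin.tail f.1, fun t => f.2 t.succ⟩

noncomputable def AtMostOneNonzeroPerRow.subchainEquiv [NoZeroDivisors α] [Nontrivial α]
    (hX : X.AtMostOneNonzeroPerRow) (k : ℕ) : X.Subchain k ≃ {i // (X ^ k) i ≠ 0} :=
  Equiv.ofBijective
    (fun f => ⟨f.1 0, fun h => hX.pow_apply_ne_zero f (congrFun h _)⟩)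
    ⟨fun f g h => hX.subchain_ext (congrArg Subtype.val h), fun ⟨i, hi⟩ => by
      obtain ⟨j, hj⟩ := Function.ne_iff.mp hi
      obtain ⟨f, rfl⟩ := exists_subchain_of_pow_apply_ne_zero hj
      exact ⟨f, rfl⟩⟩

end Matrix

/-- For a complex `n × n` matrix `X` with at most one nonzero entry in each row and at most
one nonzero entry in each column (a simple line diagram), the rank of `X^k` equals the
number of `k`-subchains, i.e. the number of sequences `(i_0, …, i_k)` with
`X_{i_{t−1} i_t} ≠ 0` for all `t = 1, …, k`. -/
theorem rank_pow_eq_card_subchains (n : ℕ) (X : Matrix (Fin n) (Fin n) ℂ)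
    (hrow : ∀ i j j' : Fin n, X i j ≠ 0 → X i j' ≠ 0 → j = j')
    (hcol : ∀ i i' j : Fin n, X i j ≠ 0 → X i' j ≠ 0 → i = i') :
    ∀ k, 1 ≤ k →
      (X ^ k).rank =
        Nat.card {f : Fin (k + 1) → Fin n // ∀ t : Fin k, X (f t.castSucc) (f t.succ) ≠ 0} := by
  intro k _
  open scoped ComplexOrder in
  calc (X ^ k).rank = Nat.card {i // (X ^ k) i ≠ 0} :=
        Matrix.AtMostOneNonzeroPerCol.rank_eq (Matrix.AtMostOneNonzeroPerCol.pow hcol k)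
    _ = Nat.card (X.Subchain k) :=
        Nat.card_congr (Matrix.AtMostOneNonzeroPerRow.subchainEquiv hrow k).symm
end

section
/- For every dimension vector d = (d_1,…,d_r) of positive integers with d_1+⋯+d_r = n, the matrix X(d) associated to the horizontal line diagram L_h(d) is a Richardson element for the standard parabolic subalgebra p(d) of sl_n(ℂ): the linear span of {[y, X(d)] : y ∈ p(d)} equals the nilradical n(d). -/
/-!
Along the lines of `L_h(d)` every dot `i` has at most one neighbour `s(i)` to its right and one
neighbour `p(i)` to its left, so `X = X(d)` is a partial permutation matrix and
`[E_{ij}, X] = E_{i,s(j)} − E_{p(i),j}`, a missing neighbour contributing `0`.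

Let `a` lie in an earlier column than `b`. If `a` has smaller height than `b` (lies above it),
the column of `b` is tall enough for `s(a)` to exist and to lie no further right than `b`; then
`E_{s(a),b} ∈ p(d)` and `E_{ab} = E_{s(a),s(b)} − [E_{s(a),b}, X]`, where the first term has the
same shape with `b` moved along its line to the right. Otherwise `p(b)` exists and lies no further
left than `a`, and `E_{ab} = [E_{a,p(b)}, X] + E_{p(a),p(b)}`, with `a` moved to the left.
Induction on the column of `b`, resp. of `a`, gives `n(d) ⊆ [p(d), X]`; the reverse inclusion
holds because `X` is strictly block upper triangular.
-/

open Matrix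

def off (d : ℕ → ℕ) (c : ℕ) : ℕ := ∑ x ∈ Finset.range c, d x

/-- Lines of the horizontal line diagram `L_h(d)` (0-based labels, see the paper). -/
def IsHLine (d : ℕ → ℕ) (r : ℕ) (i j : ℕ) : Prop :=
  ∃ c c' k, c < c' ∧ c' < r ∧ k < d c ∧ k < d c' ∧
    (∀ c'', c < c'' → c'' < c' → d c'' ≤ k) ∧ i = off d c + k ∧ j = off d c' + k

open Classical in
/-- The matrix `X(d) = Σ_{lines i—j} E_{ij}` of the horizontal line diagram `L_h(d)`. -/
noncomputable def XH (d : ℕ → ℕ) (r n : ℕ) : Matrix (Fin n) (Fin n) ℂ :=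
  Matrix.of fun i j => if IsHLine d r (i : ℕ) (j : ℕ) then 1 else 0

/-- The (0-based) block index of a position `i` for the block sizes `d 0, …, d (r−1)`. -/
def blk (d : ℕ → ℕ) (r : ℕ) (i : ℕ) : ℕ :=
  ((Finset.range r).filter fun c => off d (c + 1) ≤ i).card

/-- The standard parabolic subalgebra `p(d) ⊆ sl_n(ℂ)`: traceless block upper-triangular
matrices with diagonal blocks of sizes `d 0, …, d (r−1)`. -/
noncomputable def pSl (d : ℕ → ℕ) (r n : ℕ) : Submodule ℂ (Matrix (Fin n) (Fin n) ℂ) where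
  carrier := {y | y.trace = 0 ∧
    ∀ i j : Fin n, blk d r (j : ℕ) < blk d r (i : ℕ) → y i j = 0}
  add_mem' := by
    rintro A B ⟨hA, hA'⟩ ⟨hB, hB'⟩
    refine ⟨by simp [trace_add, hA, hB], fun i j hij => by simp [hA' i j hij, hB' i j hij]⟩
  zero_mem' := by simp
  smul_mem' := by
    rintro c A ⟨hA, hA'⟩
    exact ⟨by simp [hA], fun i j hij => by simp [hA' i j hij]⟩

/-- The nilradical `n(d)` of `p(d)`: strictly block upper-triangular matrices. -/
noncomputable def nSl (d : ℕ → ℕ) (r n : ℕ) : Submodule ℂ (Matrix (Fin n) (Fin n) ℂ) where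
  carrier := {y | ∀ i j : Fin n, blk d r (j : ℕ) ≤ blk d r (i : ℕ) → y i j = 0}
  add_mem' := by
    intro A B hA hB i j hij
    simp [hA i j hij, hB i j hij]
  zero_mem' := by intro i j _; simp
  smul_mem' := by
    intro c A hA i j hij
    simp [hA i j hij]

section SingleMul

variable {ι R : Type*} [Fintype ι] [DecidableEq ι] [Semiring R] {M : Matrix ι ι R}

lemma single_one_mul_eq_sum (a b : ι) (M : Matrix ι ι R) :
    single a b 1 * M = ∑ w, single a w (M b w) := by
  ext u v
  by_cases hu : u = a
  · subst hu; simp [Matrix.sum_apply, single_apply]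
  · simp [Matrix.sum_apply, hu, Ne.symm hu]

lemma mul_single_one_eq_sum (a b : ι) (M : Matrix ι ι R) :
    M * single a b 1 = ∑ u, single u b (M u a) := by
  ext u v
  by_cases hv : v = b
  · subst hv; simp [Matrix.sum_apply, single_apply]
  · simp [Matrix.sum_apply, hv, Ne.symm hv]

lemma single_one_mul_of_row_eq {a b v : ι} (h : M b = Pi.single v 1) :
    single a b 1 * M = single a v 1 := by
  rw [single_one_mul_eq_sum, h, Finset.sum_eq_single v (fun w _ hw => by simp [hw]) (by simp)]
  simp

lemma mul_single_one_of_col_eq {a b u : ι} (h : Mᵀ a = Pi.single u 1) :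
    M * single a b 1 = single u b 1 := by
  rw [mul_single_one_eq_sum, Finset.sum_eq_single u (fun w _ hw => ?_) (by simp)]
  · simpa using congr_arg (single u b) (congr_fun h u)
  · simpa [hw] using congr_arg (single w b) (congr_fun h w)

lemma single_one_mul_mem {S : Submodule R (Matrix ι ι R)} {a b : ι}
    (h : ∀ w, M b w ≠ 0 → single a w 1 ∈ S) : single a b 1 * M ∈ S := by
  rw [single_one_mul_eq_sum]
  refine Submodule.sum_mem _ fun w _ => ?_
  by_cases hw : M b w = 0
  · simp [hw]
  · simpa using S.smul_mem (M b w) (h w hw)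

lemma mul_single_one_mem {S : Submodule R (Matrix ι ι R)} {a b : ι}
    (h : ∀ u, M u a ≠ 0 → single u b 1 ∈ S) : M * single a b 1 ∈ S := by
  rw [mul_single_one_eq_sum]
  refine Submodule.sum_mem _ fun u _ => ?_
  by_cases hu : M u a = 0
  · simp [hu]
  · simpa using S.smul_mem (M u a) (h u hu)

end SingleMul

namespace Matrix.BlockTriangular

variable {ι α R : Type*} [Fintype ι] [LinearOrder α] [NonUnitalNonAssocSemiring R]
  {f : ι → α} {x y : Matrix ι ι R}

lemma mul_strict_apply_eq_zero (hy : y.BlockTriangular f)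
    (hx : ∀ i j, f j ≤ f i → x i j = 0) {i j : ι} (hij : f j ≤ f i) : (y * x) i j = 0 := by
  rw [mul_apply]
  refine Finset.sum_eq_zero fun k _ => ?_
  rcases lt_or_ge (f k) (f i) with hki | hik
  · rw [hy hki, zero_mul]
  · rw [hx k j (hij.trans hik), mul_zero]

lemma strict_mul_apply_eq_zero (hy : y.BlockTriangular f)
    (hx : ∀ i j, f j ≤ f i → x i j = 0) {i j : ι} (hij : f j ≤ f i) : (x * y) i j = 0 := by
  rw [mul_apply]
  refine Finset.sum_eq_zero fun k _ => ?_
  rcases lt_or_ge (f j) (f k) with hjk | hkj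
  · rw [hy hjk, mul_zero]
  · rw [hx i k (hkj.trans hij), zero_mul]

end Matrix.BlockTriangular

section Bracket

variable {ι R : Type*} [Fintype ι] [CommRing R]

def bracketSpan (P : Submodule R (Matrix ι ι R)) (x : Matrix ι ι R) :
    Submodule R (Matrix ι ι R) :=
  Submodule.span R {z | ∃ y ∈ P, z = y * x - x * y}

lemma sub_mem_bracketSpan {P : Submodule R (Matrix ι ι R)} {x y : Matrix ι ι R} (hy : y ∈ P) :
    y * x - x * y ∈ bracketSpan P x :=
  Submodule.subset_span ⟨y, hy, rfl⟩

end Bracket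

section HorizontalLineDiagram

variable {d : ℕ → ℕ} {r n : ℕ}

lemma off_succ (d : ℕ → ℕ) (c : ℕ) : off d (c + 1) = off d c + d c :=
  Finset.sum_range_succ d c

lemma off_mono (d : ℕ → ℕ) : Monotone (off d) := fun _ _ h =>
  Finset.sum_le_sum_of_subset (Finset.range_subset_range.2 h)

lemma blk_eq {c i : ℕ} (hc : c < r) (h₁ : off d c ≤ i) (h₂ : i < off d (c + 1)) :
    blk d r i = c := by
  have : (Finset.range r).filter (fun x => off d (x + 1) ≤ i) = Finset.range c := by
    ext x
    simp only [Finset.mem_filter, Finset.mem_range]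
    constructor
    · rintro ⟨-, hx⟩
      by_contra! hcx
      exact (off_mono d (by omega : c + 1 ≤ x + 1)).trans hx |>.not_gt h₂
    · exact fun hx => ⟨hx.trans hc, (off_mono d (by omega)).trans h₁⟩
  rw [blk, this, Finset.card_range]

lemma exists_off_le_lt_off_succ {i : ℕ} (h : i < off d r) :
    ∃ c < r, off d c ≤ i ∧ i < off d (c + 1) := by
  induction r with
  | zero => simp [off] at h
  | succ r ih =>
    by_cases h' : i < off d r
    · obtain ⟨c, hc, h₁, h₂⟩ := ih h'
      exact ⟨c, by omega, h₁, h₂⟩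
    · exact ⟨r, by omega, by omega, h⟩

lemma blk_off_add {c k : ℕ} (hc : c < r) (hk : k < d c) : blk d r (off d c + k) = c :=
  blk_eq hc (Nat.le_add_right _ _) (by rw [off_succ]; omega)

lemma off_add_lt_off {c k : ℕ} (hc : c < r) (hk : k < d c) : off d c + k < off d r :=
  calc off d c + k < off d (c + 1) := by rw [off_succ]; omega
    _ ≤ off d r := off_mono d hc

lemma blk_spec {i : ℕ} (h : i < off d r) :
    blk d r i < r ∧ off d (blk d r i) ≤ i ∧ i < off d (blk d r i + 1) := by
  obtain ⟨c, hc, h₁, h₂⟩ := exists_off_le_lt_off_succ h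
  rw [blk_eq hc h₁ h₂]
  exact ⟨hc, h₁, h₂⟩

lemma blk_lt {i : ℕ} (h : i < off d r) : blk d r i < r :=
  (blk_spec h).1

def height (d : ℕ → ℕ) (r i : ℕ) : ℕ := i - off d (blk d r i)

lemma height_lt {i : ℕ} (h : i < off d r) : height d r i < d (blk d r i) := by
  have := blk_spec h
  have := off_succ d (blk d r i)
  unfold height; omega

lemma off_blk_add_height {i : ℕ} (h : i < off d r) : off d (blk d r i) + height d r i = i := by
  have := blk_spec h
  unfold height; omega

lemma height_off_add {c k : ℕ} (hc : c < r) (hk : k < d c) : height d r (off d c + k) = k := by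
  rw [height, blk_off_add hc hk]; omega

lemma isHLine_iff {i j : ℕ} :
    IsHLine d r i j ↔ i < off d r ∧ j < off d r ∧ blk d r i < blk d r j ∧
      height d r i = height d r j ∧
        ∀ c, blk d r i < c → c < blk d r j → d c ≤ height d r i := by
  constructor
  · rintro ⟨c, c', k, hcc', hc', hk, hk', hgap, rfl, rfl⟩
    have hc := hcc'.trans hc'
    rw [blk_off_add hc hk, blk_off_add hc' hk', height_off_add hc hk, height_off_add hc' hk']
    exact ⟨off_add_lt_off hc hk, off_add_lt_off hc' hk', hcc', rfl, hgap⟩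
  · rintro ⟨hi, hj, hblk, hheight, hgap⟩
    refine ⟨_, _, _, hblk, blk_lt hj, height_lt hi, hheight ▸ height_lt hj, hgap,
      (off_blk_add_height hi).symm, ?_⟩
    rw [hheight, off_blk_add_height hj]

lemma eq_of_blk_eq_of_height_eq {i j : ℕ} (hi : i < off d r) (hj : j < off d r)
    (hb : blk d r i = blk d r j) (hh : height d r i = height d r j) : i = j := by
  rw [← off_blk_add_height hi, ← off_blk_add_height hj, hb, hh]

namespace IsHLine

variable {i j : ℕ}

lemma blk_lt_blk (h : IsHLine d r i j) : blk d r i < blk d r j :=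
  (isHLine_iff.1 h).2.2.1

lemma height_eq (h : IsHLine d r i j) : height d r i = height d r j :=
  (isHLine_iff.1 h).2.2.2.1

lemma right_unique {j' : ℕ} (h : IsHLine d r i j) (h' : IsHLine d r i j') : j = j' := by
  obtain ⟨hi, hj, hb, hh, hgap⟩ := isHLine_iff.1 h
  obtain ⟨-, hj', hb', hh', hgap'⟩ := isHLine_iff.1 h'
  refine eq_of_blk_eq_of_height_eq hj hj' ?_ (hh.symm.trans hh')
  rcases lt_trichotomy (blk d r j) (blk d r j') with hlt | heq | hgt
  · have := hgap' _ hb hlt; have := height_lt hj; omega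
  · exact heq
  · have := hgap _ hb' hgt; have := height_lt hj'; omega

lemma left_unique {i' : ℕ} (h : IsHLine d r i j) (h' : IsHLine d r i' j) : i = i' := by
  obtain ⟨hi, hj, hb, hh, hgap⟩ := isHLine_iff.1 h
  obtain ⟨hi', -, hb', hh', hgap'⟩ := isHLine_iff.1 h'
  refine eq_of_blk_eq_of_height_eq hi hi' ?_ (hh.trans hh'.symm)
  rcases lt_trichotomy (blk d r i) (blk d r i') with hlt | heq | hgt
  · have := hgap _ hlt hb'; have := height_lt hi'; omega
  · exact heq
  · have := hgap' _ hgt hb; have := height_lt hi; omega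

end IsHLine

lemma exists_isHLine_right (hn : off d r = n) (i : Fin n) {c : ℕ} (hc : c < r)
    (hic : blk d r i < c) (hk : height d r i < d c) :
    ∃ j : Fin n, IsHLine d r i j ∧ blk d r j ≤ c := by
  have hP : ∃ x, blk d r i < x ∧ x < r ∧ height d r i < d x := ⟨c, hic, hc, hk⟩
  obtain ⟨hic', hc', hk'⟩ := Nat.find_spec hP
  have hj := off_add_lt_off hc' hk'
  have hline : IsHLine d r i (off d (Nat.find hP) + height d r i) := by
    refine isHLine_iff.2 ⟨hn ▸ i.isLt, hj, ?_, ?_, fun x hx₁ hx₂ => ?_⟩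
    · rwa [blk_off_add hc' hk']
    · rw [height_off_add hc' hk']
    · rw [blk_off_add hc' hk'] at hx₂
      by_contra! hx
      exact Nat.find_min hP hx₂ ⟨hx₁, hx₂.trans hc', hx⟩
  exact ⟨⟨_, hn ▸ hj⟩, hline,
    (blk_off_add hc' hk').trans_le (Nat.find_min' hP ⟨hic, hc, hk⟩)⟩

lemma exists_isHLine_left (hn : off d r = n) (j : Fin n) {c : ℕ} (hcj : c < blk d r j)
    (hk : height d r j < d c) :
    ∃ i : Fin n, IsHLine d r i j ∧ c ≤ blk d r i := by
  have hj : (j : ℕ) < off d r := hn ▸ j.isLt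
  let P x := height d r j < d x
  set m := Nat.findGreatest P (blk d r j - 1)
  have hcm : c ≤ m := Nat.le_findGreatest (by omega) hk
  have hmj : m < blk d r j := (Nat.findGreatest_le _).trans_lt (by omega)
  have hm : m < r := hmj.trans (blk_lt hj)
  have hk' : height d r j < d m := Nat.findGreatest_spec (P := P) (by omega : c ≤ _) hk
  have hi := off_add_lt_off hm hk'
  have hline : IsHLine d r (off d m + height d r j) j := by
    refine isHLine_iff.2 ⟨hi, hj, ?_, ?_, fun x hx₁ hx₂ => ?_⟩
    · rwa [blk_off_add hm hk']
    · rw [height_off_add hm hk']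
    · rw [blk_off_add hm hk'] at hx₁
      rw [height_off_add hm hk']
      exact not_lt.1 (Nat.findGreatest_is_greatest (P := P) hx₁ (by omega))
  exact ⟨⟨_, hn ▸ hi⟩, hline, hcm.trans_eq (blk_off_add hm hk').symm⟩

lemma isHLine_of_XH_ne_zero {i j : Fin n} (h : XH d r n i j ≠ 0) : IsHLine d r i j := by
  by_contra hl
  simp [XH, hl] at h

lemma XH_row_eq {b v : Fin n} (h : IsHLine d r b v) : XH d r n b = Pi.single v 1 := by
  funext w
  by_cases hw : w = v
  · subst hw; simp [XH, h]
  · have : ¬IsHLine d r b w := fun h' => hw (Fin.ext (h.right_unique h').symm)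
    simp [XH, hw, this]

lemma XH_transpose_row_eq {u a : Fin n} (h : IsHLine d r u a) :
    (XH d r n)ᵀ a = Pi.single u 1 := by
  funext w
  by_cases hw : w = u
  · subst hw; simp [XH, h]
  · have : ¬IsHLine d r w a := fun h' => hw (Fin.ext (h.left_unique h').symm)
    simp [XH, hw, this]

lemma XH_mem_nSl : XH d r n ∈ nSl d r n := fun i j hij => by
  by_contra h
  exact (isHLine_of_XH_ne_zero h).blk_lt_blk.not_ge hij

lemma bracketSpan_le_nSl {x : Matrix (Fin n) (Fin n) ℂ} (hx : x ∈ nSl d r n) :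
    bracketSpan (pSl d r n) x ≤ nSl d r n := by
  refine Submodule.span_le.2 ?_
  rintro _ ⟨y, ⟨-, hy⟩, rfl⟩ i j hij
  have hy' : y.BlockTriangular fun i : Fin n => blk d r i := fun i j h => hy i j h
  rw [Matrix.sub_apply, hy'.mul_strict_apply_eq_zero hx hij,
    hy'.strict_mul_apply_eq_zero hx hij, sub_zero]

lemma single_mem_pSl {a q : Fin n} (hne : a ≠ q) (h : blk d r a ≤ blk d r q) :
    single a q (1 : ℂ) ∈ pSl d r n := by
  refine ⟨trace_single_eq_of_ne a q 1 hne, fun i j hij => ?_⟩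
  rw [single_apply, if_neg]
  rintro ⟨rfl, rfl⟩
  exact hij.not_ge h

lemma single_sub_smul_one_mem_pSl (a : Fin n) :
    single a a (1 : ℂ) - (n : ℂ)⁻¹ • 1 ∈ pSl d r n := by
  refine ⟨?_, fun i j hij => ?_⟩
  · have : (n : ℂ) ≠ 0 := by exact_mod_cast a.pos.ne'
    simp [trace_sub, this]
  · have hne : i ≠ j := by rintro rfl; exact hij.false
    rw [Matrix.sub_apply, Matrix.smul_apply, one_apply_ne hne, single_apply,
      if_neg (by rintro ⟨rfl, rfl⟩; exact hne rfl)]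
    simp

lemma single_bracket_mem_bracketSpan (x : Matrix (Fin n) (Fin n) ℂ) {a q : Fin n}
    (h : blk d r a ≤ blk d r q) :
    single a q 1 * x - x * single a q 1 ∈ bracketSpan (pSl d r n) x := by
  by_cases haq : a = q
  · subst haq
    -- `E_aa` itself is not traceless, but its traceless part has the same bracket with `x`
    convert sub_mem_bracketSpan (single_sub_smul_one_mem_pSl (d := d) (r := r) a) using 1
    simp only [sub_mul, mul_sub, Matrix.smul_mul, Matrix.mul_smul, one_mul, mul_one]
    abel
  · exact sub_mem_bracketSpan (single_mem_pSl haq h)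

lemma single_mem_bracketSpan_of_height_lt (hn : off d r = n) {a b : Fin n}
    (hab : blk d r a < blk d r b) (hh : height d r a < height d r b) :
    single a b 1 ∈ bracketSpan (pSl d r n) (XH d r n) := by
  induction hm : r - blk d r b using Nat.strong_induction_on generalizing a b with
  | _ m ih =>
  have hb : (b : ℕ) < off d r := hn ▸ b.isLt
  obtain ⟨s, has, hsb⟩ :=
    exists_isHLine_right hn a (blk_lt hb) hab (hh.trans (height_lt hb))
  rw [← mul_single_one_of_col_eq (XH_transpose_row_eq has) (b := b),
    ← sub_sub_cancel (single s b 1 * XH d r n) (XH d r n * single s b 1)]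
  refine sub_mem (single_one_mul_mem fun w hw => ?_) (single_bracket_mem_bracketSpan _ hsb)
  have hbw := isHLine_of_XH_ne_zero hw
  have hwr : blk d r w < r := blk_lt (hn ▸ w.isLt)
  exact ih _ (by have := hbw.blk_lt_blk; omega) (hsb.trans_lt hbw.blk_lt_blk)
    (has.height_eq ▸ hbw.height_eq ▸ hh) rfl

lemma single_mem_bracketSpan_of_height_le (hn : off d r = n) {a b : Fin n}
    (hab : blk d r a < blk d r b) (hh : height d r b ≤ height d r a) :
    single a b 1 ∈ bracketSpan (pSl d r n) (XH d r n) := by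
  induction hm : blk d r a using Nat.strong_induction_on generalizing a b with
  | _ m ih =>
  have ha : (a : ℕ) < off d r := hn ▸ a.isLt
  obtain ⟨p, hpb, hap⟩ := exists_isHLine_left hn b hab (hh.trans_lt (height_lt ha))
  rw [← single_one_mul_of_row_eq (XH_row_eq hpb) (a := a),
    ← sub_add_cancel (single a p 1 * XH d r n) (XH d r n * single a p 1)]
  refine add_mem (single_bracket_mem_bracketSpan _ hap) (mul_single_one_mem fun u hu => ?_)
  have hua := isHLine_of_XH_ne_zero hu
  exact ih _ (hm ▸ hua.blk_lt_blk) (hua.blk_lt_blk.trans_le hap)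
    (hpb.height_eq ▸ hua.height_eq ▸ hh) rfl

lemma nSl_le_bracketSpan (hn : off d r = n) :
    nSl d r n ≤ bracketSpan (pSl d r n) (XH d r n) := by
  intro y hy
  rw [matrix_eq_sum_single y]
  refine Submodule.sum_mem _ fun i _ => Submodule.sum_mem _ fun j _ => ?_
  rcases le_or_gt (blk d r j) (blk d r i) with hji | hij
  · simp [hy i j hji]
  · rw [← mul_one (y i j), ← smul_eq_mul, ← smul_single]
    refine Submodule.smul_mem _ _ ?_
    rcases lt_or_ge (height d r i) (height d r j) with hh | hh
    · exact single_mem_bracketSpan_of_height_lt hn hij hh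
    · exact single_mem_bracketSpan_of_height_le hn hij hh

end HorizontalLineDiagram

theorem XH_is_richardson_sl_general (r n : ℕ) (d : ℕ → ℕ)
    (hn : ∑ c ∈ Finset.range r, d c = n) :
    XH d r n ∈ nSl d r n ∧
    Submodule.span ℂ {z : Matrix (Fin n) (Fin n) ℂ |
        ∃ y ∈ pSl d r n, z = y * XH d r n - XH d r n * y} = nSl d r n :=
  ⟨XH_mem_nSl, le_antisymm (bracketSpan_le_nSl XH_mem_nSl) (nSl_le_bracketSpan hn)⟩

/-- The matrix `X(d)` of the horizontal line diagram is a Richardson element for the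
standard parabolic subalgebra `p(d)` of `sl_n(ℂ)`: it lies in the nilradical `n(d)` and
the linear span of `{[y, X(d)] : y ∈ p(d)}` equals `n(d)`. -/
theorem XH_is_richardson_sl (r n : ℕ) (d : ℕ → ℕ)
    (hd : ∀ c, c < r → 0 < d c) (hn : ∑ c ∈ Finset.range r, d c = n) :
    XH d r n ∈ nSl d r n ∧
    Submodule.span ℂ {z : Matrix (Fin n) (Fin n) ℂ |
        ∃ y ∈ pSl d r n, z = y * XH d r n - XH d r n * y} = nSl d r n :=
  XH_is_richardson_sl_general r n d hn
end

section
/- Let d = (d_1,…,d_r) be a dimension vector with d_1+⋯+d_r = n and let X(d) be the matrix associated to the horizontal line diagram L_h(d). For 1 ≤ i ≤ n let b(i) be the unique index c with d_1+⋯+d_{c−1} < i ≤ d_1+⋯+d_c. Then every nonzero entry of X(d) in position (i,j) satisfies b(j) − b(i) ≤ s(d); in other words X(d) lies in g_1 ⊕ ⋯ ⊕ g_{s(d)}, where g_k is the space of matrices supported on positions (i,j) with b(j) − b(i) = k. -/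
open Matrix

open Classical in
/-- `s(d) = 1 + max{ i ≥ 1 : a block of `i` consecutive entries of `d` is strictly
surrounded by larger entries on both sides }`, and `s(d) = 1` if no such `i` exists
(here `d` is 0-indexed: the surrounding entries are `d j` and `d (j+i+1)` with
`j + i + 1 ≤ r − 1`). -/
noncomputable def sOf (d : ℕ → ℕ) (r : ℕ) : ℕ :=
  1 + ((Finset.range r).sup fun i =>
    if 1 ≤ i ∧ ∃ j, j + i + 1 < r ∧
        ∀ l, 1 ≤ l → l ≤ i → d (j + l) < d j ∧ d (j + l) < d (j + i + 1)
    then i else 0)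


lemma off_mono_s16 (d : ℕ → ℕ) {a b : ℕ} (h : a ≤ b) : off d a ≤ off d b :=
  Finset.sum_le_sum_of_subset (Finset.range_subset_range.2 h)

lemma blk_off (d : ℕ → ℕ) (r c k : ℕ) (hc : c < r) (hk : k < d c) :
    blk d r (off d c + k) = c := by
  unfold blk
  have heq : (Finset.range r).filter (fun c'' => off d (c'' + 1) ≤ off d c + k)
      = Finset.range c := by
    ext c''
    simp only [Finset.mem_filter, Finset.mem_range]
    constructor
    · rintro ⟨h1, h2⟩
      by_contra h
      push_neg at h
      have hm : off d (c + 1) ≤ off d (c'' + 1) := off_mono_s16 d (by omega)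
      have hoff : off d (c + 1) = off d c + d c := Finset.sum_range_succ d c
      omega
    · intro h
      refine ⟨by omega, ?_⟩
      have hm : off d (c'' + 1) ≤ off d c := off_mono_s16 d (by omega)
      omega
  rw [heq, Finset.card_range]

/-- The matrix `X(d)` of a horizontal line diagram lies in
`g_1 ⊕ ⋯ ⊕ g_{s(d)}`: every nonzero entry of `X(d)` is in a position `(i, j)` whose
block indices satisfy `b(i) < b(j)` and `b(j) − b(i) ≤ s(d)`. -/
theorem XH_support_grading (r n : ℕ) (d : ℕ → ℕ)
    (hd : ∀ c, c < r → 0 < d c) (hn : ∑ c ∈ Finset.range r, d c = n) :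
    ∀ i j : Fin n, XH d r n i j ≠ 0 →
      blk d r (i : ℕ) < blk d r (j : ℕ) ∧ blk d r (j : ℕ) - blk d r (i : ℕ) ≤ sOf d r := by
  classical
  intro i j hne
  rw [XH] at hne
  simp only [Matrix.of_apply] at hne
  by_cases h : IsHLine d r (i : ℕ) (j : ℕ)
  · obtain ⟨c, c', k, hcc', hc'r, hkc, hkc', hbet, hi, hj⟩ := h
    have hbi : blk d r (i : ℕ) = c := by rw [hi]; exact blk_off d r c k (by omega) hkc
    have hbj : blk d r (j : ℕ) = c' := by rw [hj]; exact blk_off d r c' k hc'r hkc'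
    rw [hbi, hbj]
    refine ⟨hcc', ?_⟩
    unfold sOf
    by_cases h1 : c + 1 = c'
    · omega
    · set i0 := c' - c - 1 with hi0
      have hi0r : i0 ∈ Finset.range r := Finset.mem_range.2 (by omega)
      have hcond : 1 ≤ i0 ∧ ∃ j, j + i0 + 1 < r ∧
          ∀ l, 1 ≤ l → l ≤ i0 → d (j + l) < d j ∧ d (j + l) < d (j + i0 + 1) := by
        refine ⟨by omega, c, by omega, fun l hl1 hl2 => ?_⟩
        have hb : d (c + l) ≤ k := hbet (c + l) (by omega) (by omega)
        have hc'' : c + i0 + 1 = c' := by omega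
        rw [hc'']
        omega
      have hle := Finset.le_sup (f := fun i => if 1 ≤ i ∧ ∃ j, j + i + 1 < r ∧
          ∀ l, 1 ≤ l → l ≤ i → d (j + l) < d j ∧ d (j + l) < d (j + i + 1)
          then i else 0) hi0r
      simp only [if_pos hcond] at hle
      omega
  · rw [if_neg h] at hne
    exact absurd rfl hne
end
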